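/- arXiv:1710.02926 — 2 statements merged into one kernel-verified Lean document; each statement's English description precedes it below -/
import Mathlib

section
/- The exact variance of η = 2(M p_C p_U)^{-1/2} Σ_i R_i T_i ε_i is V(η) = (1/M)Σ_i[(2 - p_U(1+4σ²))ε_i(1)² + (2 - p_U(1+4σ²))ε_i(0)² + p_U(2-8σ²)ε_i(1)ε_i(0)] + (p_U/M)Σ_c M_c²[(1-p_C)(ε̄_c(1)-ε̄_c(0))² + 4σ²(ε̄_c(1)+ε̄_c(0))²]. -/
open MeasureTheory ProbabilityTheory

private lemma fiber_sq {M C : ℕ} (g : Fin M → Fin C) (a : Fin M → ℝ) :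
    ∑ i, ∑ j, (if g i = g j then a i * a j else 0)
      = ∑ c, (∑ i ∈ Finset.univ.filter (fun i => g i = c), a i)^2 := by
  have h1 : ∀ i : Fin M, ∑ j, (if g i = g j then a i * a j else 0)
      = a i * ∑ j ∈ Finset.univ.filter (fun j => g j = g i), a j := by
    intro i
    rw [Finset.mul_sum, Finset.sum_filter]
    refine Finset.sum_congr rfl fun j _ => ?_
    by_cases h : g i = g j
    · rw [if_pos h, if_pos h.symm]
    · rw [if_neg h, if_neg fun h' => h h'.symm]
  simp only [h1]
  rw [← Finset.sum_fiberwise Finset.univ g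
      (fun i => a i * ∑ j ∈ Finset.univ.filter (fun j => g j = g i), a j)]
  refine Finset.sum_congr rfl fun c _ => ?_
  rw [show ∑ i ∈ Finset.univ.filter (fun i => g i = c),
        (a i * ∑ j ∈ Finset.univ.filter (fun j => g j = g i), a j)
      = ∑ i ∈ Finset.univ.filter (fun i => g i = c),
        (a i * ∑ j ∈ Finset.univ.filter (fun j => g j = c), a j) from
    Finset.sum_congr rfl fun i hi => by rw [(Finset.mem_filter.mp hi).2]]
  rw [← Finset.sum_mul, sq]

/-- The exact variance of `η = 2(M p_C p_U)^{-1/2} Σ_i R_i T_i ε_i` equals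
`(1/M)Σ_i[(2 - p_U(1+4σ²))ε_i(1)² + (2 - p_U(1+4σ²))ε_i(0)² + p_U(2-8σ²)ε_i(1)ε_i(0)]
 + (p_U/M)Σ_c M_c²[(1-p_C)(ε̄_c(1)-ε̄_c(0))² + 4σ²(ε̄_c(1)+ε̄_c(0))²]`. -/
theorem stmt11 {Ω : Type*} [MeasurableSpace Ω] (μ : Measure Ω) [IsProbabilityMeasure μ]
    (M C : ℕ) (hM : 0 < M) (g : Fin M → Fin C)
    (ε1 ε0 : Fin M → ℝ) (hmean1 : ∑ i, ε1 i = 0) (hmean0 : ∑ i, ε0 i = 0)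
    (R T : Fin M → Ω → ℝ) (pC pU σ2 : ℝ)
    (hpC : 0 < pC) (hpC1 : pC ≤ 1) (hpU : 0 < pU) (hpU1 : pU ≤ 1)
    (hσ2 : 0 ≤ σ2) (hσ2' : σ2 ≤ 1/4)
    (hmR : ∀ i, Measurable (R i)) (hmT : ∀ i, Measurable (T i))
    (hR01 : ∀ i ω, R i ω = 0 ∨ R i ω = 1) (hT11 : ∀ i ω, T i ω = 1 ∨ T i ω = -1)
    (hindep : IndepFun (fun ω i => R i ω) (fun ω i => T i ω) μ)
    (hER : ∀ i, ∫ ω, R i ω ∂μ = pC * pU)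
    (hERRsame : ∀ i j, i ≠ j → g i = g j → ∫ ω, R i ω * R j ω ∂μ = pC * pU^2)
    (hERRdiff : ∀ i j, g i ≠ g j → ∫ ω, R i ω * R j ω ∂μ = (pC * pU)^2)
    (hET : ∀ i, ∫ ω, T i ω ∂μ = 0)
    (hETTsame : ∀ i j, i ≠ j → g i = g j → ∫ ω, T i ω * T j ω ∂μ = 4 * σ2)
    (hETTdiff : ∀ i j, g i ≠ g j → ∫ ω, T i ω * T j ω ∂μ = 0)
    (ε : Fin M → Ω → ℝ)
    (hε : ∀ i ω, ε i ω = T i ω * (ε1 i - ε0 i)/2 + (ε1 i + ε0 i)/2)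
    (Mc : Fin C → ℝ) (hMc : ∀ c, Mc c = (Finset.univ.filter (fun i => g i = c)).card)
    (ebar1 ebar0 : Fin C → ℝ)
    (hebar1 : ∀ c, ebar1 c = (∑ i ∈ Finset.univ.filter (fun i => g i = c), ε1 i) / Mc c)
    (hebar0 : ∀ c, ebar0 c = (∑ i ∈ Finset.univ.filter (fun i => g i = c), ε0 i) / Mc c)
    (η : Ω → ℝ)
    (hη : ∀ ω, η ω = 2 * (Real.sqrt (M * (pC * pU)))⁻¹ * ∑ i, R i ω * T i ω * ε i ω) :
    (∫ ω, (η ω)^2 ∂μ) - (∫ ω, η ω ∂μ)^2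
      = (1/M) * ∑ i, ((2 - pU * (1 + 4 * σ2)) * (ε1 i)^2
            + (2 - pU * (1 + 4 * σ2)) * (ε0 i)^2
            + pU * (2 - 8 * σ2) * (ε1 i) * (ε0 i))
        + (pU/M) * ∑ c, (Mc c)^2 * ((1 - pC) * (ebar1 c - ebar0 c)^2
            + 4 * σ2 * (ebar1 c + ebar0 c)^2) := by
  classical
  have hMne : (M:ℝ) ≠ 0 := Nat.cast_ne_zero.mpr hM.ne'
  have hpCne : pC ≠ 0 := hpC.ne'
  have hpUne : pU ≠ 0 := hpU.ne'
  -- pointwise facts about R and T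
  have hRb : ∀ i ω, |R i ω| ≤ 1 := by
    intro i ω; rcases hR01 i ω with h | h <;> rw [h] <;> norm_num
  have hTb : ∀ i ω, |T i ω| ≤ 1 := by
    intro i ω; rcases hT11 i ω with h | h <;> rw [h] <;> norm_num
  have hTT : ∀ i ω, T i ω * T i ω = 1 := by
    intro i ω; rcases hT11 i ω with h | h <;> rw [h] <;> norm_num
  have hRR : ∀ i ω, R i ω * R i ω = R i ω := by
    intro i ω; rcases hR01 i ω with h | h <;> rw [h] <;> norm_num
  have habs1 : ∀ x y : ℝ, |x| ≤ 1 → |y| ≤ 1 → |x * y| ≤ 1 := by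
    intro x y hx hy
    rw [abs_mul]
    nlinarith [abs_nonneg x, abs_nonneg y]
  -- abbreviations
  set a : Fin M → ℝ := fun i => (ε1 i - ε0 i) / 2 with ha
  set b : Fin M → ℝ := fun i => (ε1 i + ε0 i) / 2 with hb
  have hsuma : ∑ i, a i = 0 := by
    simp only [ha]
    rw [← Finset.sum_div, Finset.sum_sub_distrib, hmean1, hmean0]
    norm_num
  -- independence machinery
  have hmRv : Measurable (fun ω i => R i ω) := measurable_pi_lambda _ hmR
  have hmTv : Measurable (fun ω i => T i ω) := measurable_pi_lambda _ hmT
  have hfac : ∀ (φ ψ : (Fin M → ℝ) → ℝ), Measurable φ → Measurable ψ →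
      (∫ ω, φ (fun i => R i ω) * ψ (fun i => T i ω) ∂μ)
        = (∫ ω, φ (fun i => R i ω) ∂μ) * ∫ ω, ψ (fun i => T i ω) ∂μ := by
    intro φ ψ hφ hψ
    exact (hindep.comp hφ hψ).integral_mul_eq_mul_integral (hφ.comp hmRv).aestronglyMeasurable
      (hψ.comp hmTv).aestronglyMeasurable
  -- moment computations
  set r : Fin M → Fin M → ℝ := fun i j =>
    if i = j then pC * pU else if g i = g j then pC * pU ^ 2 else (pC * pU) ^ 2 with hr
  set s : Fin M → Fin M → ℝ := fun i j =>
    if i = j then pC * pU else if g i = g j then pC * pU ^ 2 * (4 * σ2) else 0 with hs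
  have hRRval : ∀ i j, ∫ ω, R i ω * R j ω ∂μ = r i j := by
    intro i j
    by_cases hij : i = j
    · subst hij
      simp only [hr, if_pos rfl]
      simp only [hRR]
      exact hER i
    · by_cases hg : g i = g j
      · simp only [hr, if_neg hij, if_pos hg]
        exact hERRsame i j hij hg
      · simp only [hr, if_neg hij, if_neg hg]
        exact hERRdiff i j hg
  have hRTval : ∀ i : Fin M, ∫ ω, R i ω * T i ω ∂μ = 0 := by
    intro i
    have h := hfac (fun v => v i) (fun v => v i)
      (measurable_pi_apply i) (measurable_pi_apply i)
    simpa [hET i] using h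
  have hRRTval : ∀ i j k : Fin M, ∫ ω, R i ω * R j ω * T k ω ∂μ = 0 := by
    intro i j k
    have h := hfac (fun v => v i * v j) (fun v => v k)
      ((measurable_pi_apply i).mul (measurable_pi_apply j)) (measurable_pi_apply k)
    simpa [hET k] using h
  have hRRTTval : ∀ i j, ∫ ω, R i ω * R j ω * (T i ω * T j ω) ∂μ = s i j := by
    intro i j
    by_cases hij : i = j
    · subst hij
      simp only [hs, if_pos rfl]
      simp only [hTT, hRR, mul_one]
      exact hER i
    · have h := hfac (fun v => v i * v j) (fun v => v i * v j)
        ((measurable_pi_apply i).mul (measurable_pi_apply j))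
        ((measurable_pi_apply i).mul (measurable_pi_apply j))
      by_cases hg : g i = g j
      · simp only [hs, if_neg hij, if_pos hg]
        rw [show (∫ ω, R i ω * R j ω * (T i ω * T j ω) ∂μ)
            = (∫ ω, R i ω * R j ω ∂μ) * ∫ ω, T i ω * T j ω ∂μ from h,
          hERRsame i j hij hg, hETTsame i j hij hg]
      · simp only [hs, if_neg hij, if_neg hg]
        rw [show (∫ ω, R i ω * R j ω * (T i ω * T j ω) ∂μ)
            = (∫ ω, R i ω * R j ω ∂μ) * ∫ ω, T i ω * T j ω ∂μ from h,
          hETTdiff i j hg, mul_zero]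
  -- the summand functions
  set f : Fin M → Ω → ℝ := fun i ω => R i ω * a i + R i ω * T i ω * b i with hfdef
  have hmf : ∀ i, Measurable (f i) := fun i =>
    ((hmR i).mul_const _).add (((hmR i).mul (hmT i)).mul_const _)
  have hfb : ∀ i ω, |f i ω| ≤ |a i| + |b i| := by
    intro i ω
    have h1 : |R i ω * a i| ≤ |a i| := by
      rw [abs_mul]; nlinarith [hRb i ω, abs_nonneg (a i), abs_nonneg (R i ω)]
    have h2 : |R i ω * T i ω * b i| ≤ |b i| := by
      rw [abs_mul]
      nlinarith [habs1 _ _ (hRb i ω) (hTb i ω), abs_nonneg (b i),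
        abs_nonneg (R i ω * T i ω)]
    calc |f i ω| ≤ |R i ω * a i| + |R i ω * T i ω * b i| := abs_add_le _ _
      _ ≤ |a i| + |b i| := add_le_add h1 h2
  -- integrability
  have hbdd_int : ∀ (F : Ω → ℝ), Measurable F → ∀ K : ℝ, (∀ ω, |F ω| ≤ K) →
      Integrable F μ := fun F hF K hK =>
    (integrable_const K).mono' hF.aestronglyMeasurable (Filter.Eventually.of_forall hK)
  have IR : ∀ i, Integrable (R i) μ := fun i => hbdd_int _ (hmR i) 1 (hRb i)
  have IRT : ∀ i, Integrable (fun ω => R i ω * T i ω) μ := fun i =>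
    hbdd_int _ ((hmR i).mul (hmT i)) 1 (fun ω => habs1 _ _ (hRb i ω) (hTb i ω))
  have IRR : ∀ i j, Integrable (fun ω => R i ω * R j ω) μ := fun i j =>
    hbdd_int _ ((hmR i).mul (hmR j)) 1 (fun ω => habs1 _ _ (hRb i ω) (hRb j ω))
  have IRRT : ∀ i j k, Integrable (fun ω => R i ω * R j ω * T k ω) μ := fun i j k =>
    hbdd_int _ (((hmR i).mul (hmR j)).mul (hmT k)) 1
      (fun ω => habs1 _ _ (habs1 _ _ (hRb i ω) (hRb j ω)) (hTb k ω))
  have IRRTT : ∀ i j, Integrable (fun ω => R i ω * R j ω * (T i ω * T j ω)) μ := fun i j =>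
    hbdd_int _ (((hmR i).mul (hmR j)).mul ((hmT i).mul (hmT j))) 1
      (fun ω => habs1 _ _ (habs1 _ _ (hRb i ω) (hRb j ω)) (habs1 _ _ (hTb i ω) (hTb j ω)))
  have If : ∀ i, Integrable (f i) μ := fun i =>
    hbdd_int _ (hmf i) (|a i| + |b i|) (hfb i)
  have Iff' : ∀ i j, Integrable (fun ω => f i ω * f j ω) μ := by
    intro i j
    refine hbdd_int _ ((hmf i).mul (hmf j)) ((|a i| + |b i|) * (|a j| + |b j|)) ?_
    intro ω
    rw [abs_mul]
    exact mul_le_mul (hfb i ω) (hfb j ω) (abs_nonneg _)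
      (le_trans (abs_nonneg _) (hfb i ω))
  -- rewrite η in terms of f
  have hηf : ∀ ω, η ω = 2 * (Real.sqrt (M * (pC * pU)))⁻¹ * ∑ i, f i ω := by
    intro ω
    rw [hη ω]
    congr 1
    refine Finset.sum_congr rfl fun i _ => ?_
    rw [hε i ω]
    simp only [hfdef, ha, hb]
    rcases hT11 i ω with h | h <;> rw [h] <;> ring
  -- mean of f i
  have hEf : ∀ i, ∫ ω, f i ω ∂μ = a i * (pC * pU) := by
    intro i
    simp only [hfdef]
    rw [integral_add ((IR i).mul_const _) ((IRT i).mul_const _),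
      integral_mul_const, integral_mul_const, hER i, hRTval i]
    ring
  -- mean of η
  have hEη : ∫ ω, η ω ∂μ = 0 := by
    simp only [hηf]
    rw [integral_const_mul, integral_finset_sum _ (fun i _ => If i)]
    simp only [hEf]
    rw [← Finset.sum_mul, hsuma]
    ring
  -- second moments of the f's
  have hEff : ∀ i j, ∫ ω, f i ω * f j ω ∂μ = a i * a j * r i j + b i * b j * s i j := by
    intro i j
    have hptw : (fun ω => f i ω * f j ω) = fun ω =>
        a i * a j * (R i ω * R j ω)
          + (a i * b j * (R i ω * R j ω * T j ω)
            + (b i * a j * (R i ω * R j ω * T i ω)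
              + b i * b j * (R i ω * R j ω * (T i ω * T j ω)))) := by
      funext ω
      simp only [hfdef]
      ring
    calc ∫ ω, f i ω * f j ω ∂μ
        = ∫ ω, (a i * a j * (R i ω * R j ω)
          + (a i * b j * (R i ω * R j ω * T j ω)
            + (b i * a j * (R i ω * R j ω * T i ω)
              + b i * b j * (R i ω * R j ω * (T i ω * T j ω))))) ∂μ := by rw [hptw]
      _ = a i * a j * r i j + b i * b j * s i j := by
          have I1 : Integrable (fun ω => a i * a j * (R i ω * R j ω)) μ :=
            (IRR i j).const_mul _
          have I2 : Integrable (fun ω => a i * b j * (R i ω * R j ω * T j ω)) μ :=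
            (IRRT i j j).const_mul _
          have I3 : Integrable (fun ω => b i * a j * (R i ω * R j ω * T i ω)) μ :=
            (IRRT i j i).const_mul _
          have I4 : Integrable (fun ω => b i * b j * (R i ω * R j ω * (T i ω * T j ω))) μ :=
            (IRRTT i j).const_mul _
          have I34 : Integrable (fun ω => b i * a j * (R i ω * R j ω * T i ω)
              + b i * b j * (R i ω * R j ω * (T i ω * T j ω))) μ := I3.add I4
          have I234 : Integrable (fun ω => a i * b j * (R i ω * R j ω * T j ω)
              + (b i * a j * (R i ω * R j ω * T i ω)
                + b i * b j * (R i ω * R j ω * (T i ω * T j ω)))) μ := I2.add I34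
          rw [integral_add I1 I234, integral_add I2 I34, integral_add I3 I4,
            integral_const_mul, integral_const_mul, integral_const_mul, integral_const_mul,
            hRRval i j, hRRTval i j j, hRRTval i j i, hRRTTval i j]
          ring
  -- second moment of η
  have hEη2 : ∫ ω, (η ω) ^ 2 ∂μ
      = (2 * (Real.sqrt (M * (pC * pU)))⁻¹) ^ 2
        * ∑ i, ∑ j, (a i * a j * r i j + b i * b j * s i j) := by
    have hptw : ∀ ω, (η ω) ^ 2
        = (2 * (Real.sqrt (M * (pC * pU)))⁻¹) ^ 2 * ∑ i, ∑ j, f i ω * f j ω := by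
      intro ω
      rw [hηf ω, mul_pow, pow_two (∑ i, f i ω), Finset.sum_mul_sum]
    simp only [hptw]
    rw [integral_const_mul,
      integral_finset_sum _ (fun i _ => integrable_finset_sum _ (fun j _ => Iff' i j))]
    congr 1
    refine Finset.sum_congr rfl fun i _ => ?_
    rw [integral_finset_sum _ (fun j _ => Iff' i j)]
    exact Finset.sum_congr rfl fun j _ => hEff i j
  -- split the double sum
  have key : ∀ i j : Fin M, a i * a j * r i j + b i * b j * s i j
      = (pC * pU) ^ 2 * (a i * a j)
        + (pC * pU ^ 2 - (pC * pU) ^ 2) * (if g i = g j then a i * a j else 0)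
        + (pC * pU - pC * pU ^ 2) * (if i = j then a i * a j else 0)
        + pC * pU ^ 2 * (4 * σ2) * (if g i = g j then b i * b j else 0)
        + (pC * pU - pC * pU ^ 2 * (4 * σ2)) * (if i = j then b i * b j else 0) := by
    intro i j
    by_cases hij : i = j
    · subst hij
      simp only [hr, hs, eq_self_iff_true, if_true]
      ring
    · by_cases hg : g i = g j
      · simp only [hr, hs, if_neg hij, if_pos hg]
        ring
      · simp only [hr, hs, if_neg hij, if_neg hg]
        ring
  have hsplit : ∑ i, ∑ j, (a i * a j * r i j + b i * b j * s i j)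
      = (pC * pU) ^ 2 * ((∑ i, a i) * (∑ i, a i))
        + (pC * pU ^ 2 - (pC * pU) ^ 2) * (∑ i, ∑ j, if g i = g j then a i * a j else 0)
        + (pC * pU - pC * pU ^ 2) * (∑ i, a i * a i)
        + pC * pU ^ 2 * (4 * σ2) * (∑ i, ∑ j, if g i = g j then b i * b j else 0)
        + (pC * pU - pC * pU ^ 2 * (4 * σ2)) * (∑ i, b i * b i) := by
    simp only [key, Finset.sum_add_distrib, ← Finset.mul_sum, Finset.sum_ite_eq,
      Finset.mem_univ, if_true, Finset.sum_mul_sum]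
  -- cluster sums in terms of ebar
  have hfib1 : ∀ c, Mc c * ebar1 c = ∑ i ∈ Finset.univ.filter (fun i => g i = c), ε1 i := by
    intro c
    by_cases hc : Mc c = 0
    · have hcard : (Finset.univ.filter (fun i => g i = c)).card = 0 := by
        have := hMc c
        rw [hc] at this
        exact_mod_cast this.symm
      rw [Finset.card_eq_zero] at hcard
      rw [hc, hcard]
      simp
    · rw [hebar1 c, mul_div_cancel₀ _ hc]
  have hfib0 : ∀ c, Mc c * ebar0 c = ∑ i ∈ Finset.univ.filter (fun i => g i = c), ε0 i := by
    intro c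
    by_cases hc : Mc c = 0
    · have hcard : (Finset.univ.filter (fun i => g i = c)).card = 0 := by
        have := hMc c
        rw [hc] at this
        exact_mod_cast this.symm
      rw [Finset.card_eq_zero] at hcard
      rw [hc, hcard]
      simp
    · rw [hebar0 c, mul_div_cancel₀ _ hc]
  have hSa : ∀ c, ∑ i ∈ Finset.univ.filter (fun i => g i = c), a i
      = Mc c * (ebar1 c - ebar0 c) / 2 := by
    intro c
    simp only [ha]
    rw [← Finset.sum_div, Finset.sum_sub_distrib, ← hfib1 c, ← hfib0 c]
    ring
  have hSb : ∀ c, ∑ i ∈ Finset.univ.filter (fun i => g i = c), b i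
      = Mc c * (ebar1 c + ebar0 c) / 2 := by
    intro c
    simp only [hb]
    rw [← Finset.sum_div, Finset.sum_add_distrib, ← hfib1 c, ← hfib0 c]
    ring
  have hk2 : (2 * (Real.sqrt (M * (pC * pU)))⁻¹) ^ 2 = 4 / ((M : ℝ) * (pC * pU)) := by
    have hx : (0:ℝ) ≤ (M : ℝ) * (pC * pU) := by positivity
    rw [mul_pow, inv_pow, Real.sq_sqrt hx]
    ring
  -- final assembly
  rw [hEη, hEη2, hsplit, fiber_sq g a, fiber_sq g b, hk2, hsuma]
  simp only [hSa, hSb]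
  have hQ : ∀ i : Fin M, (1 / (M:ℝ)) * ((2 - pU * (1 + 4 * σ2)) * (ε1 i) ^ 2
        + (2 - pU * (1 + 4 * σ2)) * (ε0 i) ^ 2
        + pU * (2 - 8 * σ2) * (ε1 i) * (ε0 i))
      = 4 / ((M : ℝ) * (pC * pU)) * ((pC * pU - pC * pU ^ 2) * (a i * a i)
        + (pC * pU - pC * pU ^ 2 * (4 * σ2)) * (b i * b i)) := by
    intro i
    simp only [ha, hb]
    field_simp
    ring
  have hW : ∀ c : Fin C, (pU / (M:ℝ)) * ((Mc c) ^ 2 * ((1 - pC) * (ebar1 c - ebar0 c) ^ 2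
        + 4 * σ2 * (ebar1 c + ebar0 c) ^ 2))
      = 4 / ((M : ℝ) * (pC * pU)) * ((pC * pU ^ 2 - (pC * pU) ^ 2)
          * (Mc c * (ebar1 c - ebar0 c) / 2) ^ 2
        + pC * pU ^ 2 * (4 * σ2) * (Mc c * (ebar1 c + ebar0 c) / 2) ^ 2) := by
    intro c
    field_simp
    ring
  have e1 : (1/(M:ℝ)) * ∑ i, ((2 - pU * (1 + 4 * σ2)) * (ε1 i)^2
        + (2 - pU * (1 + 4 * σ2)) * (ε0 i)^2
        + pU * (2 - 8 * σ2) * (ε1 i) * (ε0 i))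
      = 4 / ((M : ℝ) * (pC * pU)) * ((pC * pU - pC * pU ^ 2) * ∑ i, a i * a i
        + (pC * pU - pC * pU ^ 2 * (4 * σ2)) * ∑ i, b i * b i) := by
    rw [Finset.mul_sum]
    rw [show ∑ i, (1/(M:ℝ)) * ((2 - pU * (1 + 4 * σ2)) * (ε1 i)^2
          + (2 - pU * (1 + 4 * σ2)) * (ε0 i)^2
          + pU * (2 - 8 * σ2) * (ε1 i) * (ε0 i))
        = ∑ i, (4 / ((M : ℝ) * (pC * pU)) * ((pC * pU - pC * pU ^ 2) * (a i * a i))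
          + 4 / ((M : ℝ) * (pC * pU)) * ((pC * pU - pC * pU ^ 2 * (4 * σ2)) * (b i * b i)))
      from Finset.sum_congr rfl fun i _ => by rw [hQ i]; ring]
    rw [Finset.sum_add_distrib, ← Finset.mul_sum, ← Finset.mul_sum,
      ← Finset.mul_sum, ← Finset.mul_sum]
    ring
  have e2 : (pU/(M:ℝ)) * ∑ c, (Mc c)^2 * ((1 - pC) * (ebar1 c - ebar0 c)^2
        + 4 * σ2 * (ebar1 c + ebar0 c)^2)
      = 4 / ((M : ℝ) * (pC * pU)) * ((pC * pU ^ 2 - (pC * pU) ^ 2)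
          * ∑ c, (Mc c * (ebar1 c - ebar0 c) / 2) ^ 2
        + pC * pU ^ 2 * (4 * σ2) * ∑ c, (Mc c * (ebar1 c + ebar0 c) / 2) ^ 2) := by
    rw [Finset.mul_sum]
    rw [show ∑ c, (pU/(M:ℝ)) * ((Mc c)^2 * ((1 - pC) * (ebar1 c - ebar0 c)^2
          + 4 * σ2 * (ebar1 c + ebar0 c)^2))
        = ∑ c, (4 / ((M : ℝ) * (pC * pU)) * ((pC * pU ^ 2 - (pC * pU) ^ 2)
            * (Mc c * (ebar1 c - ebar0 c) / 2) ^ 2)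
          + 4 / ((M : ℝ) * (pC * pU)) * (pC * pU ^ 2 * (4 * σ2)
            * (Mc c * (ebar1 c + ebar0 c) / 2) ^ 2))
      from Finset.sum_congr rfl fun c _ => by rw [hW c]; ring]
    rw [Finset.sum_add_distrib, ← Finset.mul_sum, ← Finset.mul_sum,
      ← Finset.mul_sum, ← Finset.mul_sum]
    ring
  rw [e1, e2]
  ring
end

section
/- The difference between the limit of the normalized Liang-Zeger variance and the true variance of η equals (p_C p_U / M) Σ_c M_c² (ε̄_c(1) - ε̄_c(0))², which is nonnegative; hence the LZ variance is always at least as large as the true variance. -/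
/-- The difference between the (limit of the normalized) Liang-Zeger variance
and the true variance of `η` equals `(p_C p_U/M) Σ_c M_c²(ε̄_c(1)-ε̄_c(0))² ≥ 0`;
hence the LZ variance is at least as large as the true variance. -/
theorem stmt13 (M C : ℕ) (hM : 0 < M) (pC pU σ2 : ℝ)
    (hpC : 0 ≤ pC) (hpC1 : pC ≤ 1) (hpU : 0 ≤ pU) (hpU1 : pU ≤ 1)
    (ε1 ε0 : Fin M → ℝ) (Mc : Fin C → ℝ) (hMcnn : ∀ c, 0 ≤ Mc c)
    (ebar1 ebar0 : Fin C → ℝ) (VLZ Vη : ℝ)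
    (hVLZ : VLZ = (1/M) * ∑ i, ((2 - pU * (1 + 4 * σ2)) * ((ε1 i)^2 + (ε0 i)^2)
          + pU * (2 - 8 * σ2) * (ε1 i) * (ε0 i))
        + (pU/M) * ∑ c, (Mc c)^2 * ((ebar1 c - ebar0 c)^2
          + 4 * σ2 * (ebar1 c + ebar0 c)^2))
    (hVη : Vη = (1/M) * ∑ i, ((2 - pU * (1 + 4 * σ2)) * ((ε1 i)^2 + (ε0 i)^2)
          + pU * (2 - 8 * σ2) * (ε1 i) * (ε0 i))
        + (pU/M) * ∑ c, (Mc c)^2 * ((1 - pC) * (ebar1 c - ebar0 c)^2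
          + 4 * σ2 * (ebar1 c + ebar0 c)^2)) :
    VLZ - Vη = (pC * pU/M) * ∑ c, (Mc c)^2 * (ebar1 c - ebar0 c)^2 ∧
      0 ≤ (pC * pU/M) * ∑ c, (Mc c)^2 * (ebar1 c - ebar0 c)^2 ∧ Vη ≤ VLZ := by
  have hdiff : VLZ - Vη = (pC * pU/M) * ∑ c, (Mc c)^2 * (ebar1 c - ebar0 c)^2 := by
    subst hVLZ hVη
    rw [Finset.mul_sum, Finset.mul_sum, Finset.mul_sum]
    have : ∀ c : Fin C,
        pU/M * ((Mc c)^2 * ((ebar1 c - ebar0 c)^2 + 4 * σ2 * (ebar1 c + ebar0 c)^2))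
        - pU/M * ((Mc c)^2 * ((1 - pC) * (ebar1 c - ebar0 c)^2 + 4 * σ2 * (ebar1 c + ebar0 c)^2))
        = pC * pU/M * ((Mc c)^2 * (ebar1 c - ebar0 c)^2) := by
      intro c; ring
    rw [add_sub_add_left_eq_sub, ← Finset.sum_sub_distrib]
    rw [Finset.mul_sum]
    exact Finset.sum_congr rfl fun c _ => this c
  have hnn : 0 ≤ (pC * pU/M) * ∑ c, (Mc c)^2 * (ebar1 c - ebar0 c)^2 := by
    apply mul_nonneg
    · apply div_nonneg (mul_nonneg hpC hpU) (Nat.cast_nonneg M)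
    · exact Finset.sum_nonneg fun c _ => mul_nonneg (sq_nonneg _) (sq_nonneg _)
  exact ⟨hdiff, hnn, by linarith [hdiff ▸ hnn]⟩
end
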